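/- arXiv:1010.3070 — 4 statements merged into one kernel-verified Lean document; each statement's English description precedes it below -/
import Mathlib

section
/- Let p and q be two fixed, distinct odd primes and let A and B be positive integers such that A/(p−1) + B/(q−1) ≥ 1. Then there are infinitely many positive integers N that are simultaneously (p,A)-good and (q,B)-good. -/
/-!
The numbers below `b ^ i` whose base-`b` digits are all at most `A` form a discrete Cantor set
`goodSet b A i` of diameter `A * repunit b i`: at the top level it consists of `A + 1` translates
of `goodSet b A (i - 1)`, separated by gaps of `(b - 1 - A) * repunit b (i - 1)` missing integers.
For `A < p` and `B < q` the hypothesis `A / (p - 1) + B / (q - 1) ≥ 1` says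
`(p - 1 - A) * (q - 1 - B) ≤ A * B`, a thickness condition as in Newhouse's gap lemma: at any pair
of levels, the gaps of one set are no longer than the pieces of the other. Hence two translates of
such sets meet as soon as each meets the convex hull of the other.

As `log q / log p` is irrational, there are arbitrarily large `i` with
`p ^ i ≤ q ^ l < p ^ (i + 1) / (p - 1)`. Then the hulls of `p ^ i + goodSet p A i` and
`q ^ l + goodSet q B l` interlock, and a common point of the two sets is good for both bases.
-/

open Set

namespace ErdosGrahamRuzsaStraus

def IsGood (b A n : ℕ) : Prop := ∀ d ∈ b.digits n, d ≤ A

def repunit (b i : ℕ) : ℕ := ∑ k ∈ Finset.range i, b ^ k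

def goodSet (b A i : ℕ) : Set ℕ := {n | n < b ^ i ∧ IsGood b A n}

variable {b A i n : ℕ}

theorem repunit_succ (b i : ℕ) : repunit b (i + 1) = repunit b i + b ^ i :=
  Finset.sum_range_succ _ _

theorem sub_one_mul_repunit_add_one (hb : 1 ≤ b) (i : ℕ) : (b - 1) * repunit b i + 1 = b ^ i := by
  obtain ⟨c, rfl⟩ := Nat.exists_eq_add_of_le' hb
  simpa [repunit, mul_comm] using geom_sum_mul_add c i

theorem isGood_zero (b A : ℕ) : IsGood b A 0 := by simp [IsGood]

theorem IsGood.mono {A' : ℕ} (h : IsGood b A n) (hA : A ≤ A') : IsGood b A' n :=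
  fun d hd => (h d hd).trans hA

theorem isGood_add_base_pow_mul_iff {m d : ℕ} (hb : 1 < b) (hm : m < b ^ i) (hd : d < b) :
    IsGood b A (m + b ^ i * d) ↔ d ≤ A ∧ IsGood b A m := by
  rcases Nat.eq_zero_or_pos d with rfl | hd0
  · simp
  have hlen : (b.digits m).length ≤ i := (Nat.digits_length_le_iff hb m).2 hm
  rw [IsGood, IsGood, ← Nat.add_sub_cancel' hlen, ← Nat.digits_append_zeroes_append_digits hb hd0,
    Nat.digits_of_lt b d hd0.ne' hd]
  simp only [List.mem_append, List.mem_replicate, List.mem_singleton]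
  constructor
  · intro h
    exact ⟨h d (Or.inr rfl), fun x hx => h x (Or.inl (Or.inl hx))⟩
  · rintro ⟨hdA, hm⟩ x ((hx | ⟨-, rfl⟩) | rfl)
    exacts [hm x hx, Nat.zero_le A, hdA]

theorem zero_mem_goodSet (hb : 0 < b) (A i : ℕ) : 0 ∈ goodSet b A i :=
  ⟨Nat.pow_pos hb, isGood_zero b A⟩

theorem mem_goodSet_succ_iff (hb : 1 < b) (hA : A < b) :
    n ∈ goodSet b A (i + 1) ↔ ∃ d ≤ A, ∃ m ∈ goodSet b A i, n = m + b ^ i * d := by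
  constructor
  · rintro ⟨hn, hgood⟩
    have hd : n / b ^ i < b := Nat.div_lt_of_lt_mul (by rwa [← pow_succ])
    have hm : n % b ^ i < b ^ i := Nat.mod_lt _ (Nat.pow_pos (by omega))
    have hsplit : n = n % b ^ i + b ^ i * (n / b ^ i) := (Nat.mod_add_div n (b ^ i)).symm
    rw [hsplit, isGood_add_base_pow_mul_iff hb hm hd] at hgood
    exact ⟨n / b ^ i, hgood.1, n % b ^ i, ⟨hm, hgood.2⟩, hsplit⟩
  · rintro ⟨d, hdA, m, ⟨hm, hgood⟩, rfl⟩
    refine ⟨?_, (isGood_add_base_pow_mul_iff hb hm (by omega)).2 ⟨hdA, hgood⟩⟩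
    calc m + b ^ i * d < b ^ i + b ^ i * d := by omega
      _ = b ^ i * (d + 1) := by ring
      _ ≤ b ^ i * b := Nat.mul_le_mul_left _ (by omega)
      _ = b ^ (i + 1) := (pow_succ b i).symm

theorem le_of_mem_goodSet (hb : 1 < b) (hA : A < b) (hn : n ∈ goodSet b A i) :
    n ≤ A * repunit b i := by
  induction i generalizing n with
  | zero => simpa [goodSet, repunit] using hn.1
  | succ i ih =>
    obtain ⟨d, hdA, m, hm, rfl⟩ := (mem_goodSet_succ_iff hb hA).1 hn
    have := ih hm
    have : b ^ i * d ≤ b ^ i * A := Nat.mul_le_mul_left _ hdA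
    rw [repunit_succ]
    nlinarith

theorem mul_repunit_mem_goodSet (hb : 1 < b) (hA : A < b) (i : ℕ) :
    A * repunit b i ∈ goodSet b A i := by
  induction i with
  | zero => simpa [repunit] using zero_mem_goodSet (by omega) A 0
  | succ i ih =>
    exact (mem_goodSet_succ_iff hb hA).2 ⟨A, le_rfl, _, ih, by rw [repunit_succ]; ring⟩

theorem exists_mem_goodSet_near (hb : 1 < b) (hA : A < b) (i : ℕ)
    (hn : n ≤ A * repunit b (i + 1)) :
    ∃ x ∈ goodSet b A (i + 1), n ≤ x ∧ x ≤ n + (b - 1 - A) * repunit b i := by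
  induction i generalizing n with
  | zero =>
    have hnA : n ≤ A := by simpa [repunit] using hn
    refine ⟨n, (mem_goodSet_succ_iff hb hA).2 ⟨n, hnA, 0, zero_mem_goodSet (by omega) A 0, ?_⟩,
      le_rfl, Nat.le_add_right _ _⟩
    simp
  | succ i ih =>
    set P := b ^ (i + 1)
    set d := min A (n / P)
    have hPd : P * d ≤ n := (Nat.mul_le_mul_left P (min_le_right _ _)).trans (Nat.mul_div_le n P)
    have hRmono : (b - 1 - A) * repunit b i ≤ (b - 1 - A) * repunit b (i + 1) :=
      Nat.mul_le_mul_left _ (by rw [repunit_succ]; omega)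
    by_cases hlow : n - P * d ≤ A * repunit b (i + 1)
    · obtain ⟨x, hx, hnx, hxn⟩ := ih hlow
      refine ⟨x + P * d, (mem_goodSet_succ_iff hb hA).2 ⟨d, min_le_left _ _, x, hx, rfl⟩, ?_, ?_⟩
      all_goals omega
    · -- `n` lies in the gap just below the child starting at `P * (d + 1)`
      have hsplit : A * repunit b (i + 1 + 1) = A * repunit b (i + 1) + P * A := by
        rw [repunit_succ]; ring
      have hdA : d < A := by
        refine lt_of_le_of_ne (min_le_left _ _) fun hdA => hlow ?_
        rw [hdA] at hPd ⊢
        omega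
      have hd : d = n / P := min_eq_right (by omega)
      have hnP : n < P * (d + 1) := hd ▸ Nat.lt_mul_div_succ n (Nat.pow_pos (by omega))
      have hP : A * repunit b (i + 1) + (b - 1 - A) * repunit b (i + 1) + 1 = P := by
        rw [← add_mul, show A + (b - 1 - A) = b - 1 by omega]
        exact sub_one_mul_repunit_add_one (by omega) _
      have hPd1 : P * (d + 1) = P * d + P := by ring
      refine ⟨0 + P * (d + 1), (mem_goodSet_succ_iff hb hA).2
        ⟨d + 1, hdA, 0, zero_mem_goodSet (by omega) A _, rfl⟩, by omega, by omega⟩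

theorem mul_le_or_mul_le_of_mul_le {u w A B : ℕ} (h : u * w ≤ A * B) (X Y : ℕ) :
    u * X ≤ B * Y ∨ w * Y ≤ A * X := by
  by_contra! hlt
  have := mul_lt_mul'' hlt.1 hlt.2 (Nat.zero_le _) (Nat.zero_le _)
  have : u * X * (w * Y) ≤ B * Y * (A * X) := by
    calc u * X * (w * Y) = u * w * (X * Y) := by ring
      _ ≤ A * B * (X * Y) := Nat.mul_le_mul_right _ h
      _ = B * Y * (A * X) := by ring
  omega

section GapLemma

variable {p q A B : ℕ}

/- The piece of `t + goodSet q B (j + 1)` through a point of the hull of `s + goodSet p A (i + 1)`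
is at least as long as the gaps of the latter set, so it also contains one of its points. -/
theorem exists_child_meets (hp : 1 < p) (hA : A < p) (hq : 1 < q) (hB : B < q) {i j s t : ℕ}
    (hgap : (p - 1 - A) * repunit p i ≤ B * repunit q j)
    (h : ((t + ·) '' goodSet q B (j + 1) ∩ Icc s (s + A * repunit p (i + 1))).Nonempty) :
    ∃ e ≤ B,
      ((t + q ^ j * e + ·) '' goodSet q B j ∩ Icc s (s + A * repunit p (i + 1))).Nonempty ∧
      ((s + ·) '' goodSet p A (i + 1) ∩
        Icc (t + q ^ j * e) (t + q ^ j * e + B * repunit q j)).Nonempty := by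
  obtain ⟨_, ⟨_, hy₀, rfl⟩, hsy, hys⟩ := h
  obtain ⟨e, he, y, hy, rfl⟩ := (mem_goodSet_succ_iff hq hB).1 hy₀
  dsimp only at hsy hys
  have hyB := le_of_mem_goodSet hq hB hy
  refine ⟨e, he, ⟨_, ⟨y, hy, rfl⟩, by simp only [mem_Icc]; omega⟩, ?_⟩
  by_cases hc : t + q ^ j * e < s
  · exact ⟨s + 0, ⟨0, zero_mem_goodSet (by omega) A _, rfl⟩, by simp only [mem_Icc]; omega⟩
  · obtain ⟨x, hx, hcx, hxc⟩ :=
      exists_mem_goodSet_near hp hA i (n := t + q ^ j * e - s) (by omega)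
    exact ⟨s + x, ⟨x, hx, rfl⟩, by simp only [mem_Icc]; omega⟩

theorem exists_add_eq_add_of_meets (hp : 1 < p) (hA : A < p) (hq : 1 < q) (hB : B < q)
    (hthick : (p - 1 - A) * (q - 1 - B) ≤ A * B) :
    ∀ i j s t, ((t + ·) '' goodSet q B j ∩ Icc s (s + A * repunit p i)).Nonempty →
      ((s + ·) '' goodSet p A i ∩ Icc t (t + B * repunit q j)).Nonempty →
      ∃ x ∈ goodSet p A i, ∃ y ∈ goodSet q B j, s + x = t + y
  | 0, _, _, _, ⟨_, ⟨y, hy, rfl⟩, hsy, hys⟩, _ =>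
    ⟨0, zero_mem_goodSet (by omega) A 0, y, hy, by simp [repunit] at hsy hys; omega⟩
  | _ + 1, 0, _, _, _, ⟨_, ⟨x, hx, rfl⟩, htx, hxt⟩ =>
    ⟨x, hx, 0, zero_mem_goodSet (by omega) B 0, by simp [repunit] at htx hxt; omega⟩
  | i + 1, j + 1, s, t, hY, hX => by
    rcases mul_le_or_mul_le_of_mul_le hthick (repunit p i) (repunit q j) with hgap | hgap
    · obtain ⟨e, he, hY', hX'⟩ := exists_child_meets hp hA hq hB hgap hY
      obtain ⟨x, hx, y, hy, hxy⟩ :=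
        exists_add_eq_add_of_meets hp hA hq hB hthick (i + 1) j s (t + q ^ j * e) hY' hX'
      exact ⟨x, hx, y + q ^ j * e, (mem_goodSet_succ_iff hq hB).2 ⟨e, he, y, hy, rfl⟩, by omega⟩
    · obtain ⟨d, hd, hX', hY'⟩ := exists_child_meets hq hB hp hA hgap hX
      obtain ⟨x, hx, y, hy, hxy⟩ :=
        exists_add_eq_add_of_meets hp hA hq hB hthick i (j + 1) (s + p ^ i * d) t hY' hX'
      exact ⟨x + p ^ i * d, (mem_goodSet_succ_iff hp hA).2 ⟨d, hd, x, hx, rfl⟩, y, hy, by omega⟩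
termination_by i j => i + j

end GapLemma

section Approximation

variable {α β : ℝ}

theorem exists_nat_mul_sub_ne_zero_abs_lt (hα : 0 < α) (hβ : 0 < β)
    (hindep : ∀ k j : ℕ, (k : ℝ) * β = j * α → k = 0) {η : ℝ} (hη : 0 < η) :
    ∃ k j : ℕ, (k : ℝ) * β - j * α ≠ 0 ∧ |(k : ℝ) * β - j * α| < η := by
  obtain ⟨n, hn⟩ := exists_nat_gt (α / η)
  have hn0 : (0 : ℝ) < n := (div_pos hα hη).trans hn
  obtain ⟨j, k, hk, -, hjk⟩ := Real.exists_int_int_abs_mul_sub_le (β / α) (n := n) (by exact_mod_cast hn0)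
  have hsmall : α / (n + 1) < η := by
    rw [div_lt_iff₀ hη] at hn
    rw [div_lt_iff₀ (by positivity)]
    linarith
  have hj : (-1 : ℝ) < j := by
    have : 1 / ((n : ℝ) + 1) < 1 := by rw [div_lt_one (by positivity)]; linarith
    have : (0 : ℝ) < k := by exact_mod_cast hk
    have : (0 : ℝ) ≤ k * (β / α) := by positivity
    linarith [(abs_le.1 hjk).2]
  have hj' : (-1 : ℤ) < j := by exact_mod_cast hj
  lift j to ℕ using by omega
  lift k to ℕ using hk.le
  have hscale : (k : ℝ) * β - j * α = α * (k * (β / α) - j) := by field_simp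
  push_cast at hjk
  refine ⟨k, j, fun h0 => ?_, ?_⟩
  · have := hindep k j (by linarith)
    omega
  · rw [hscale, abs_mul, abs_of_pos hα]
    calc α * |k * (β / α) - j| ≤ α * (1 / (n + 1)) := by gcongr
      _ < η := by rwa [mul_one_div]

theorem exists_nat_mul_le_nat_mul_lt_add (hα : 0 < α) (hβ : 0 < β)
    (hindep : ∀ k j : ℕ, (k : ℝ) * β = j * α → k = 0) {ε : ℝ} (hε : 0 < ε) (M : ℕ) :
    ∃ i l : ℕ, M ≤ i ∧ (i : ℝ) * α ≤ l * β ∧ (l : ℝ) * β < i * α + ε := by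
  obtain ⟨k, j, hne, habs⟩ := exists_nat_mul_sub_ne_zero_abs_lt hα hβ hindep (lt_min hε hβ)
  obtain ⟨hlo, hhi⟩ := abs_lt.1 habs
  have hminε := min_le_left ε β
  have hminβ := min_le_right ε β
  rcases hne.lt_or_gt with hneg | hpos
  · -- walk down from `M * β` in steps of `g`
    set g := (j : ℝ) * α - k * β
    have hg0 : 0 < g := by linarith
    set K := ⌊M * β / g⌋₊
    have hK : (K : ℝ) * g ≤ M * β := by
      have := Nat.floor_le (div_nonneg (by positivity) hg0.le : 0 ≤ M * β / g)
      rwa [le_div_iff₀ hg0] at this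
    have hK' : M * β < (K + 1) * g := by
      have := Nat.lt_floor_add_one (M * β / g)
      rwa [div_lt_iff₀ hg0] at this
    have hMK : M ≤ K := Nat.le_floor (by rw [le_div_iff₀ hg0]; gcongr; linarith)
    have hj : 1 ≤ j := by
      by_contra! hj
      have : (0 : ℝ) ≤ k * β := by positivity
      simp only [Nat.lt_one_iff.1 hj, CharP.cast_eq_zero, zero_mul, sub_zero] at hneg
      linarith
    refine ⟨K * j, K * k + M, le_trans hMK (Nat.le_mul_of_pos_right K hj), ?_, ?_⟩
    · push_cast; nlinarith
    · push_cast; nlinarith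
  · -- walk up from `-M * α` in steps of `g`
    set g := (k : ℝ) * β - j * α
    set K := ⌈M * α / g⌉₊
    have hK : M * α ≤ K * g := by
      have := Nat.le_ceil (M * α / g)
      rwa [div_le_iff₀ hpos] at this
    have hK' : K * g < M * α + g := by
      have := Nat.ceil_lt_add_one (div_nonneg (by positivity) hpos.le : 0 ≤ M * α / g)
      rw [← sub_lt_iff_lt_add, lt_div_iff₀ hpos, sub_mul, one_mul] at this
      linarith
    refine ⟨K * j + M, K * k, Nat.le_add_left M _, ?_, ?_⟩
    · push_cast; nlinarith
    · push_cast; nlinarith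

end Approximation

theorem eq_zero_of_mul_log_eq_mul_log {p q : ℕ} (hp : p.Prime) (hq : q.Prime) (hpq : p ≠ q)
    (k j : ℕ) (h : (k : ℝ) * Real.log q = j * Real.log p) : k = 0 := by
  have hpow : q ^ k = p ^ j := by
    have : Real.log ((q : ℝ) ^ k) = Real.log ((p : ℝ) ^ j) := by rwa [Real.log_pow, Real.log_pow]
    exact_mod_cast Real.log_injOn_pos (by simp [hq.pos]) (by simp [hp.pos]) this
  by_contra hk
  have hj : j ≠ 0 := by
    rintro rfl
    exact (Nat.one_lt_pow hk hq.one_lt).ne' hpow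
  exact hpq (hp.pow_inj' hq hj hk hpow.symm).1

theorem exists_pow_le_pow_and_mul_pow_lt {p q : ℕ} (hp : p.Prime) (hq : q.Prime) (hpq : p ≠ q)
    {a c : ℕ} (ha : 0 < a) (hac : a < c) (M : ℕ) :
    ∃ i l, M ≤ i ∧ p ^ i ≤ q ^ l ∧ a * q ^ l < c * p ^ i := by
  have hlog : ∀ x : ℕ, 1 < x → 0 < Real.log x := fun x hx => Real.log_pos (by exact_mod_cast hx)
  have ha' : (0 : ℝ) < a := by exact_mod_cast ha
  have hc' : (0 : ℝ) < c := by exact_mod_cast ha.trans hac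
  obtain ⟨i, l, hMi, hle, hlt⟩ := exists_nat_mul_le_nat_mul_lt_add (hlog p hp.one_lt)
    (hlog q hq.one_lt) (eq_zero_of_mul_log_eq_mul_log hp hq hpq)
    (sub_pos.2 (Real.log_lt_log ha' (by exact_mod_cast hac : (a : ℝ) < c))) M
  have hp' : (0 : ℝ) < p := by exact_mod_cast hp.pos
  have hq' : (0 : ℝ) < q := by exact_mod_cast hq.pos
  refine ⟨i, l, hMi, ?_, ?_⟩
  · rw [← Real.log_pow, ← Real.log_pow, Real.log_le_log_iff (by positivity) (by positivity)] at hle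
    exact_mod_cast hle
  · have : Real.log (a * (q : ℝ) ^ l) < Real.log (c * (p : ℝ) ^ i) := by
      rw [Real.log_mul ha'.ne' (by positivity), Real.log_mul hc'.ne' (by positivity),
        Real.log_pow, Real.log_pow]
      linarith
    exact_mod_cast (Real.log_lt_log_iff (by positivity) (by positivity)).1 this

theorem exists_gt_isGood_isGood_of_le {p q A B : ℕ} (hp : p.Prime) (hq : q.Prime) (hpq : p ≠ q)
    (hA : 0 < A) (hAp : A < p) (hB : 0 < B) (hBq : B < q)
    (hthick : (p - 1 - A) * (q - 1 - B) ≤ A * B) (hAB : A * (q - 1) ≤ B * (p - 1)) (n : ℕ) :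
    ∃ N, n < N ∧ IsGood p A N ∧ IsGood q B N := by
  have hp1 := hp.one_lt
  have hq1 := hq.one_lt
  obtain ⟨i, l, hni, hpq_le, hpq_lt⟩ :=
    exists_pow_le_pow_and_mul_pow_lt hp hq hpq (a := p - 1) (c := p) (by omega) (by omega) n
  have hRp := sub_one_mul_repunit_add_one hp1.le i
  have hRq := sub_one_mul_repunit_add_one hq1.le l
  have hstart : q ^ l ≤ p ^ i + A * repunit p i := by
    have hpow : p * p ^ i = (p - 1) * (p ^ i + repunit p i) + 1 := by
      rw [mul_add, add_assoc, hRp, ← add_one_mul (p - 1), Nat.sub_add_cancel hp1.le]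
    have : q ^ l ≤ p ^ i + repunit p i :=
      Nat.le_of_mul_le_mul_left (by omega) (by omega : 0 < p - 1)
    exact this.trans (by gcongr; exact Nat.le_mul_of_pos_left _ hA)
  have hlen : A * repunit p i ≤ B * repunit q l := by
    refine Nat.le_of_mul_le_mul_left ?_ (Nat.mul_pos (by omega : 0 < p - 1) (by omega : 0 < q - 1))
    calc (p - 1) * (q - 1) * (A * repunit p i) = A * (q - 1) * ((p - 1) * repunit p i) := by ring
      _ ≤ B * (p - 1) * ((q - 1) * repunit q l) := Nat.mul_le_mul hAB (by omega)
      _ = (p - 1) * (q - 1) * (B * repunit q l) := by ring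
  obtain ⟨x, hx, y, hy, hxy⟩ := exists_add_eq_add_of_meets hp1 hAp hq1 hBq hthick i l (p ^ i) (q ^ l)
    ⟨q ^ l + 0, ⟨0, zero_mem_goodSet (by omega) B l, rfl⟩, by simp only [mem_Icc]; omega⟩
    ⟨p ^ i + A * repunit p i, ⟨_, mul_repunit_mem_goodSet hp1 hAp i, rfl⟩,
      by simp only [mem_Icc]; omega⟩
  have hNp := (mem_goodSet_succ_iff hp1 hAp).2 ⟨1, hA, x, hx, rfl⟩
  have hNq := (mem_goodSet_succ_iff hq1 hBq).2 ⟨1, hB, y, hy, rfl⟩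
  refine ⟨x + p ^ i * 1, by have := Nat.lt_pow_self hp1 (n := i); omega, hNp.2, ?_⟩
  rw [show x + p ^ i * 1 = y + q ^ l * 1 by omega]
  exact hNq.2

theorem exists_gt_isGood_isGood {p q A B : ℕ} (hp : p.Prime) (hq : q.Prime) (hpq : p ≠ q)
    (hA : 0 < A) (hAp : A < p) (hB : 0 < B) (hBq : B < q)
    (hthick : (p - 1 - A) * (q - 1 - B) ≤ A * B) (n : ℕ) :
    ∃ N, n < N ∧ IsGood p A N ∧ IsGood q B N := by
  rcases le_total (A * (q - 1)) (B * (p - 1)) with hAB | hBA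
  · exact exists_gt_isGood_isGood_of_le hp hq hpq hA hAp hB hBq hthick hAB n
  · obtain ⟨N, hnN, hNq, hNp⟩ := exists_gt_isGood_isGood_of_le hq hp hpq.symm hB hBq hA hAp
      (by rwa [mul_comm, mul_comm B]) hBA n
    exact ⟨N, hnN, hNp, hNq⟩

theorem sub_min_mul_sub_min_le_of_div_add_div {p q A B : ℕ} (hp : 1 < p) (hq : 1 < q)
    (h : 1 ≤ (A : ℝ) / (p - 1) + B / (q - 1)) :
    (p - 1 - min A (p - 1)) * (q - 1 - min B (q - 1)) ≤ min A (p - 1) * min B (q - 1) := by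
  rcases le_total (p - 1) A with hA | hA
  · simp [min_eq_right hA]
  rcases le_total (q - 1) B with hB | hB
  · simp [min_eq_right hB]
  rw [min_eq_left hA, min_eq_left hB]
  have hp' : (0 : ℝ) < p - 1 := by rw [sub_pos]; exact_mod_cast hp
  have hq' : (0 : ℝ) < q - 1 := by rw [sub_pos]; exact_mod_cast hq
  rw [div_add_div _ _ hp'.ne' hq'.ne', one_le_div (by positivity)] at h
  rify [hA, hB, hp.le, hq.le]
  nlinarith

end ErdosGrahamRuzsaStraus

open ErdosGrahamRuzsaStraus in
theorem infinitely_many_good_two_primes_general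
    (p q A B : ℕ) (hp : p.Prime) (hq : q.Prime)
    (hpq : p ≠ q)
    (hA : 0 < A) (hB : 0 < B)
    (hineq : (A : ℝ) / ((p : ℝ) - 1) + (B : ℝ) / ((q : ℝ) - 1) ≥ 1) :
    {N : ℕ | 0 < N ∧ (∀ d ∈ Nat.digits p N, d ≤ A) ∧
      (∀ d ∈ Nat.digits q N, d ≤ B)}.Infinite := by
  have hp1 := hp.one_lt
  have hq1 := hq.one_lt
  -- digits are below the base anyway, so capping `A` at `p - 1` changes no goodness condition
  have hthick := sub_min_mul_sub_min_le_of_div_add_div hp1 hq1 hineq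
  set A' := min A (p - 1)
  set B' := min B (q - 1)
  have hA' : 0 < A' := lt_min hA (by omega)
  have hB' : 0 < B' := lt_min hB (by omega)
  have hAp : A' < p := by omega
  have hBq : B' < q := by omega
  refine Set.infinite_of_forall_exists_gt fun n => ?_
  obtain ⟨N, hnN, hNp, hNq⟩ := exists_gt_isGood_isGood hp hq hpq hA' hAp hB' hBq hthick n
  exact ⟨N, ⟨by omega, hNp.mono (min_le_left _ _), hNq.mono (min_le_left _ _)⟩, hnN⟩

/-- Erdős–Graham–Ruzsa–Straus: for two distinct odd primes `p, q` and positive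
integers `A, B` with `A/(p-1) + B/(q-1) ≥ 1`, there are infinitely many
positive integers `N` that are both `(p,A)`-good and `(q,B)`-good. -/
theorem infinitely_many_good_two_primes
    (p q A B : ℕ) (hp : p.Prime) (hq : q.Prime)
    (hp2 : 2 < p) (hq2 : 2 < q) (hpq : p ≠ q)
    (hA : 0 < A) (hB : 0 < B)
    (hineq : (A : ℝ) / ((p : ℝ) - 1) + (B : ℝ) / ((q : ℝ) - 1) ≥ 1) :
    {N : ℕ | 0 < N ∧ (∀ d ∈ Nat.digits p N, d ≤ A) ∧
      (∀ d ∈ Nat.digits q N, d ≤ B)}.Infinite :=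
  infinitely_many_good_two_primes_general p q A B hp hq hpq hA hB hineq
end

section
/- Let p and q be two fixed, distinct odd primes. Then there are infinitely many positive integers N such that gcd(C(2N,N), p·q) = 1, i.e., neither p nor q divides the central binomial coefficient C(2N,N). -/
/-!
By Kummer's theorem, an odd prime `p` does not divide `C(2N, N)` exactly when every base-`p`
digit of `N` is at most `(p - 1)/2`. Let `p < q`. Since `q^K` outgrows `p^K`, there are
arbitrarily large `K` with no power of `q` in `(p^K, p^(K+1)]`. For such `K`, a greedy descent,
peeling off the top digit in whichever base has the larger top place value, writes
`E = (p^(K+1) - 1)/2` (all base-`p` digits equal to `(p - 1)/2`) as `u + v` with `u < p^K`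
having small base-`p` digits and `v` having small base-`q` digits. Subtracting `u` from `E`
digit by digit involves no borrows, so `v = E - u` has small base-`p` digits as well, and
`v ≥ (p^K - 1)/2`.
-/

def SmallDigits (b n : ℕ) : Prop := ∀ d ∈ b.digits n, 2 * d < b

namespace SmallDigits

variable {b n : ℕ}

theorem zero : SmallDigits b 0 := by
  simp [SmallDigits]

theorem iff_mod_div (hb : 1 < b) :
    SmallDigits b n ↔ 2 * (n % b) < b ∧ SmallDigits b (n / b) := by
  rcases n.eq_zero_or_pos with rfl | hn
  · simp only [Nat.zero_mod, Nat.zero_div, zero, and_true, true_iff]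
    omega
  · simp [SmallDigits, Nat.digits_def' hb hn]

theorem add_mul {d x : ℕ} (hb : 1 < b) (hd : 2 * d < b) (hx : SmallDigits b x) :
    SmallDigits b (d + b * x) := by
  have hdb : d < b := by omega
  rw [iff_mod_div hb, Nat.add_mul_mod_self_left, Nat.mod_eq_of_lt hdb,
    Nat.add_mul_div_left _ _ (by omega), Nat.div_eq_of_lt hdb, Nat.zero_add]
  exact ⟨hd, hx⟩

theorem mul_pow_add {d u j : ℕ} (hb : 1 < b) (hd : 2 * d < b) (hu : u < b ^ j)
    (h : SmallDigits b u) : SmallDigits b (d * b ^ j + u) := by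
  induction j generalizing u with
  | zero =>
    obtain rfl : u = 0 := by simpa using hu
    simpa using add_mul hb hd zero
  | succ j ih =>
    rw [iff_mod_div hb] at h
    have hdiv : u / b < b ^ j := Nat.div_lt_of_lt_mul (by rwa [← pow_succ'])
    have hsplit : d * b ^ (j + 1) + u = u % b + b * (d * b ^ j + u / b) := by
      conv_lhs => rw [← Nat.mod_add_div u b]
      ring
    rw [hsplit]
    exact add_mul hb h.1 (ih hdiv h.2)

theorem two_mul_mod_pow_lt (hb : 1 < b) (h : SmallDigits b n) (i : ℕ) :
    2 * (n % b ^ i) < b ^ i := by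
  induction i generalizing n with
  | zero => simp [Nat.mod_one]
  | succ i ih =>
    rw [iff_mod_div hb] at h
    have hi := ih h.2
    rw [pow_succ', Nat.mod_mul]
    nlinarith

theorem coprime_centralBinom {p : ℕ} (hp : p.Prime) (h : SmallDigits p n) :
    Nat.Coprime (Nat.centralBinom n) p := by
  have hno_carries : (Nat.centralBinom n).factorization p = 0 := by
    rw [Nat.centralBinom, two_mul, Nat.factorization_choose' hp (Nat.lt_succ_self _),
      Finset.card_eq_zero]
    refine Finset.filter_false_of_mem fun i _ => not_le.2 ?_
    have := two_mul_mod_pow_lt hp.one_lt h i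
    omega
  refine Nat.coprime_comm.1 (hp.coprime_iff_not_dvd.2 fun hdvd => ?_)
  rw [hp.dvd_iff_one_le_factorization (Nat.centralBinom_ne_zero n), hno_carries] at hdvd
  exact absurd hdvd (by norm_num)

/-- Subtracting from `(b^k - 1)/2`, all of whose digits are `(b - 1)/2`, produces no borrows. -/
theorem sub_of_two_mul_add_one_eq_pow {E u k : ℕ} (hb : 1 < b) (hb_odd : Odd b)
    (hE : 2 * E + 1 = b ^ k) (hu : SmallDigits b u) (huE : u ≤ E) : SmallDigits b (E - u) := by
  induction k generalizing E u with
  | zero =>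
    obtain rfl : E = 0 := by simpa using hE
    obtain rfl : u = 0 := by omega
    exact zero
  | succ k ih =>
    obtain ⟨E', hE'⟩ := hb_odd.pow (n := k)
    obtain ⟨P, rfl⟩ := hb_odd
    have hE_digits : E = P + (2 * P + 1) * E' := by
      rw [pow_succ, hE'] at hE
      linarith
    rw [iff_mod_div hb] at hu
    have hmod : u % (2 * P + 1) ≤ P := by omega
    have hdiv : u / (2 * P + 1) ≤ E' := Nat.lt_succ_iff.1 <| Nat.div_lt_of_lt_mul <| by
      rw [Nat.mul_succ]; omega
    have hsplit : E - u = (P - u % (2 * P + 1)) + (2 * P + 1) * (E' - u / (2 * P + 1)) := by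
      have := Nat.mod_add_div u (2 * P + 1)
      have := Nat.mul_le_mul_left (2 * P + 1) hdiv
      rw [Nat.mul_sub]
      omega
    rw [hsplit]
    exact add_mul hb (by omega) (ih hE'.symm hu.2 hdiv)

end SmallDigits

theorem exists_mul_add_eq_of_two_mul_add_two_le {p X Y m : ℕ} (hp : Odd p) (hX : 0 < X)
    (hXY : X ≤ Y) (hm : 2 * m + 2 ≤ p * X + Y) :
    ∃ d r, 2 * d < p ∧ 2 * r + 2 ≤ X + Y ∧ d * X + r = m := by
  obtain ⟨P, rfl⟩ := hp
  by_cases hPm : P * X ≤ m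
  · exact ⟨P, m - P * X, by omega, by rw [add_mul, mul_assoc] at hm; omega, by omega⟩
  · refine ⟨m / X, m % X, ?_, by have := Nat.mod_lt m hX; omega, Nat.div_add_mod' m X⟩
    have : m / X < P := Nat.div_lt_of_lt_mul (by rw [mul_comm]; omega)
    omega

/-- For odd `p, q` the largest numbers below `p^k`, resp. `q^l`, with small digits are
`(p^k - 1)/2` and `(q^l - 1)/2`, so the range of `m` here is the largest possible. -/
def SmallDigitSplit (p q k l : ℕ) : Prop :=
  ∀ m, 2 * m + 2 ≤ p ^ k + q ^ l →
    ∃ u v, u + v = m ∧ u < p ^ k ∧ v < q ^ l ∧ SmallDigits p u ∧ SmallDigits q v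

namespace SmallDigitSplit

variable {p q k l : ℕ}

theorem symm (h : SmallDigitSplit p q k l) : SmallDigitSplit q p l k := by
  intro m hm
  obtain ⟨u, v, huv, hu, hv, hpu, hqv⟩ := h m (by omega)
  exact ⟨v, u, by omega, hv, hu, hqv, hpu⟩

theorem succ_left (hp : 1 < p) (hp_odd : Odd p) (hpq : p ^ k ≤ q ^ l)
    (h : SmallDigitSplit p q k l) : SmallDigitSplit p q (k + 1) l := by
  intro m hm
  rw [pow_succ'] at hm
  obtain ⟨d, r, hd, hr, rfl⟩ :=
    exists_mul_add_eq_of_two_mul_add_two_le hp_odd (by positivity) hpq hm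
  obtain ⟨u, v, rfl, hu, hv, hpu, hqv⟩ := h r hr
  refine ⟨d * p ^ k + u, v, by ring, ?_, hv, SmallDigits.mul_pow_add hp hd hu hpu, hqv⟩
  rw [pow_succ']
  nlinarith

/-- The hypotheses say `p^(k-1) ≤ q^l` and `q^(l-1) ≤ p^k`; the descent removes the top digit
in the base whose top place value is larger, which preserves them. -/
theorem of_interlaced (hp : 1 < p) (hp_odd : Odd p) (hq : 1 < q) (hq_odd : Odd q)
    (hk : p ^ k ≤ p * q ^ l) (hl : q ^ l ≤ q * p ^ k) : SmallDigitSplit p q k l := by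
  obtain ⟨s, hs⟩ : ∃ s, k + l = s := ⟨_, rfl⟩
  induction s generalizing p q k l with
  | zero =>
    obtain ⟨rfl, rfl⟩ : k = 0 ∧ l = 0 := by omega
    intro m hm
    exact ⟨0, 0, by simp only [pow_zero] at hm; omega, by simp, by simp, .zero, .zero⟩
  | succ s ih =>
    have peel : ∀ {p q k l : ℕ}, 1 < p → Odd p → 1 < q → Odd q → p ^ k ≤ p * q ^ l →
        q ^ l ≤ q * p ^ k → k + l = s + 1 → q ^ l * p ≤ p ^ k * q →
        SmallDigitSplit p q k l := by
      intro p q k l hp hp_odd hq hq_odd hk hl hs hle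
      obtain ⟨k, rfl⟩ : ∃ k', k = k' + 1 := Nat.exists_eq_succ_of_ne_zero fun hk0 => by
        subst hk0
        have : q ≤ q ^ l := Nat.le_self_pow (by omega) q
        simp only [pow_zero, one_mul] at hle
        nlinarith
      rw [pow_succ'] at hk
      rw [pow_succ, mul_right_comm, mul_comm (p ^ k)] at hle
      have hpq : p ^ k ≤ q ^ l := Nat.le_of_mul_le_mul_left hk (by omega)
      have hqp : q ^ l ≤ q * p ^ k := Nat.le_of_mul_le_mul_right hle (by omega)
      exact succ_left hp hp_odd hpq <|
        ih hp hp_odd hq hq_odd (hpq.trans (Nat.le_mul_of_pos_left _ (by omega))) hqp (by omega)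
    rcases le_total (q ^ l * p) (p ^ k * q) with hle | hle
    · exact peel hp hp_odd hq hq_odd hk hl hs hle
    · exact (peel hq hq_odd hp hp_odd hl hk (by omega) hle).symm

end SmallDigitSplit

theorem exists_mul_pow_lt_pow {p q : ℕ} (hp : 0 < p) (hpq : p < q) (c : ℕ) :
    ∃ j, c * p ^ j < q ^ j := by
  have hp' : (0 : ℚ) < p := by exact_mod_cast hp
  obtain ⟨j, hj⟩ := pow_unbounded_of_one_lt (c : ℚ)
    ((one_lt_div hp').2 (by exact_mod_cast hpq) : (1 : ℚ) < q / p)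
  refine ⟨j, ?_⟩
  rw [div_pow, lt_div_iff₀ (by positivity)] at hj
  exact_mod_cast hj

/-- No power of `q` lies in `(p^K, p^(K+1)]`. -/
theorem exists_log_pow_succ_eq {p q : ℕ} (hp : 0 < p) (hpq : p < q) (B : ℕ) :
    ∃ K, B ≤ K ∧ Nat.log q (p ^ (K + 1)) = Nat.log q (p ^ K) := by
  by_contra! h
  have hgrowth : ∀ j, j ≤ Nat.log q (p ^ (B + j)) := by
    intro j
    induction j with
    | zero => simp
    | succ j ih =>
      have hmono :=
        Nat.log_mono_right (b := q) (pow_le_pow_right₀ hp (Nat.le_add_right (B + j) 1))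
      have := h (B + j) (by omega)
      rw [← add_assoc]
      omega
  obtain ⟨j, hj⟩ := exists_mul_pow_lt_pow hp hpq (p ^ B)
  have : q ^ j ≤ p ^ (B + j) :=
    (Nat.pow_le_pow_right (by omega) (hgrowth j)).trans (Nat.pow_log_le_self q (by positivity))
  rw [pow_add] at this
  omega

theorem exists_smallDigits_both_gt {p q : ℕ} (hp : 1 < p) (hp_odd : Odd p) (hq : 1 < q)
    (hq_odd : Odd q) (hpq : p < q) (B : ℕ) :
    ∃ N, B < N ∧ SmallDigits p N ∧ SmallDigits q N := by
  obtain ⟨K, hBK, hlog⟩ := exists_log_pow_succ_eq (by omega) hpq (2 * B + 1)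
  set t := Nat.log q (p ^ K)
  have hqt : q ^ t ≤ p ^ K := Nat.pow_log_le_self q (by positivity)
  have hpK : p ^ (K + 1) < q ^ (t + 1) := hlog ▸ Nat.lt_pow_succ_log_self hq _
  have hK : 3 * p ^ K ≤ p ^ (K + 1) := by
    rw [pow_succ']
    exact Nat.mul_le_mul_right _ (by obtain ⟨_, rfl⟩ := hp_odd; omega)
  have hKpow : K < p ^ K := Nat.lt_pow_self hp
  obtain ⟨E, hE⟩ := hp_odd.pow (n := K + 1)
  obtain ⟨u, v, rfl, hu, -, hpu, hqv⟩ :=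
    SmallDigitSplit.of_interlaced hp hp_odd hq hq_odd (k := K) (l := t + 1)
      (by nlinarith) (by rw [pow_succ']; exact Nat.mul_le_mul_left q hqt) E (by omega)
  refine ⟨v, by omega, ?_, hqv⟩
  simpa using
    SmallDigits.sub_of_two_mul_add_one_eq_pow hp hp_odd hE.symm hpu (Nat.le_add_right u v)

/-- For two fixed, distinct odd primes `p, q`, there are infinitely many
positive integers `N` with `gcd (C(2N,N), p*q) = 1`. -/
theorem infinitely_many_coprime_centralBinom_two_primes
    (p q : ℕ) (hp : p.Prime) (hq : q.Prime)
    (hp2 : 2 < p) (hq2 : 2 < q) (hpq : p ≠ q) :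
    {N : ℕ | 0 < N ∧ Nat.gcd (Nat.choose (2 * N) N) (p * q) = 1}.Infinite := by
  wlog hlt : p < q generalizing p q
  · simpa only [Nat.mul_comm q p] using this q p hq hp hq2 hp2 hpq.symm (by omega)
  refine Set.infinite_of_forall_exists_gt fun B => ?_
  obtain ⟨N, hBN, hpN, hqN⟩ := exists_smallDigits_both_gt hp.one_lt (hp.odd_of_ne_two hp2.ne')
    hq.one_lt (hq.odd_of_ne_two hq2.ne') hlt B
  exact ⟨N, ⟨by omega, (hpN.coprime_centralBinom hp).mul_right (hqN.coprime_centralBinom hq)⟩,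
    hBN⟩
end

section
/- Let p be an odd prime and A a positive integer with A < p − 1. Then for every positive integer a, the real interval [a, ((p−1)/A)·a) contains a (p,A)-good number; that is, there exists a positive integer n with a ≤ n and n·A < (p−1)·a such that every base-p digit of n is at most A. -/
/-!
If `m` is `(b, k)`-good, some good `n > m` satisfies `k * n ≤ (b - 1) * m + k`: if the last
digit of `m` is below `k`, take `n = m + 1`; otherwise `m = b * u + k`, and `n = b * n'` for the
good `n' > u` given by induction. Applied to the largest good `m < a` (`0` is good), this yields a
good `n ≥ a` with `k * n ≤ (b - 1) * (a - 1) + k < (b - 1) * a`.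
-/

/-- The `(b, k)`-good numbers. -/
def DigitsLE (b k n : ℕ) : Prop := ∀ d ∈ Nat.digits b n, d ≤ k

namespace DigitsLE

variable {b k : ℕ}

theorem zero : DigitsLE b k 0 := by
  simp [DigitsLE]

theorem add_mul_iff (hb : 1 < b) {r : ℕ} (hr : r < b) (n : ℕ) :
    DigitsLE b k (r + b * n) ↔ r ≤ k ∧ DigitsLE b k n := by
  by_cases h0 : r = 0 ∧ n = 0
  · simp [DigitsLE, h0.1, h0.2]
  · rw [DigitsLE, Nat.digits_add b hb r n hr (by tauto)]
    simp [DigitsLE]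

theorem exists_gt_mul_le (hk : 0 < k) (hkb : k < b) {m : ℕ} (hm : DigitsLE b k m) :
    ∃ n, DigitsLE b k n ∧ m < n ∧ k * n ≤ (b - 1) * m + k := by
  have hb : 1 < b := by omega
  induction m using Nat.strong_induction_on with
  | _ m ih =>
  have hdecomp : m % b + b * (m / b) = m := Nat.mod_add_div m b
  rw [← hdecomp, add_mul_iff hb (Nat.mod_lt m (by omega))] at hm
  obtain ⟨hr, hu⟩ := hm
  rcases hr.lt_or_eq with hr | hr
  · refine ⟨m + 1, ?_, m.lt_succ_self, ?_⟩
    · rw [← hdecomp, add_right_comm, add_mul_iff hb (by omega)]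
      exact ⟨hr, hu⟩
    · nlinarith [Nat.mul_le_mul_right m (show k ≤ b - 1 by omega)]
  · have hm0 : 0 < m := by omega
    obtain ⟨n', hn', hun', hkn'⟩ := ih (m / b) (Nat.div_lt_self hm0 hb) hu
    refine ⟨0 + b * n', (add_mul_iff hb (by omega) n').2 ⟨k.zero_le, hn'⟩, ?_, ?_⟩
    · nlinarith
    · obtain ⟨c, rfl⟩ : ∃ c, b = c + 1 := ⟨b - 1, by omega⟩
      rw [Nat.add_sub_cancel] at hkn' ⊢
      nlinarith

end DigitsLE

theorem good_number_in_interval_general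
    (p A a : ℕ)
    (hA : 0 < A) (hAp : A < p - 1) (ha : 0 < a) :
    ∃ n : ℕ, 0 < n ∧ a ≤ n ∧ n * A < (p - 1) * a ∧
      ∀ d ∈ Nat.digits p n, d ≤ A := by
  classical
  set m := Nat.findGreatest (DigitsLE p A) (a - 1)
  have hm : DigitsLE p A m := Nat.findGreatest_spec (Nat.zero_le _) DigitsLE.zero
  have hma : m < a := (Nat.findGreatest_le _).trans_lt (by omega)
  obtain ⟨n, hn, hmn, hkn⟩ := DigitsLE.exists_gt_mul_le hA (by omega) hm
  have han : a ≤ n := by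
    by_contra! h
    exact Nat.findGreatest_is_greatest hmn (by omega) hn
  refine ⟨n, by omega, han, ?_, hn⟩
  calc n * A = A * n := mul_comm n A
    _ ≤ (p - 1) * m + A := hkn
    _ < (p - 1) * (m + 1) := by rw [mul_add_one]; omega
    _ ≤ (p - 1) * a := Nat.mul_le_mul_left _ hma

/-- For an odd prime `p` and a positive integer `A < p - 1`, every interval
`[a, ((p-1)/A) * a)` contains a `(p,A)`-good number. -/
theorem good_number_in_interval
    (p A a : ℕ) (hp : p.Prime) (hp2 : 2 < p)
    (hA : 0 < A) (hAp : A < p - 1) (ha : 0 < a) :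
    ∃ n : ℕ, 0 < n ∧ a ≤ n ∧ n * A < (p - 1) * a ∧
      ∀ d ∈ Nat.digits p n, d ≤ A :=
  good_number_in_interval_general p A a hA hAp ha
end

section
/- Let q be an odd prime, B a positive integer with q ≤ 2B and B ≤ q − 1, and κ a positive integer. Then the number S′ = q^κ − B·(q^κ − 1)/(q − 1) is a positive integer, satisfies S′ = ((q − B − 1)/(q − 1))·(q^κ − 1) + 1, and is a (q,B)-good number, i.e., every base-q digit of S′ is at most B. -/
/-!
Write `R = (q^κ - 1)/(q - 1) = 1 + q + ⋯ + q^(κ-1)` and `c = q - B - 1`. Since `q^κ = (q - 1) R + 1`,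
we get `S' = c R + 1`, whose base-`q` expansion is `c + 1, c, …, c`; both `c + 1 = q - B` and `c`
are at most `B` because `q ≤ 2B`.
-/

open Finset

namespace Nat

theorem ofDigits_replicate (b c k : ℕ) :
    ofDigits b (List.replicate k c) = c * ∑ i ∈ range k, b ^ i := by
  induction k with
  | zero => simp
  | succ k ih => rw [List.replicate_succ, ofDigits_cons, ih, geom_sum_succ]; ring

theorem ofDigits_succ_cons_replicate (b c k : ℕ) :
    ofDigits b ((c + 1) :: List.replicate k c) = c * ∑ i ∈ range (k + 1), b ^ i + 1 := by
  rw [ofDigits_cons, ofDigits_replicate, geom_sum_succ]; ring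

theorem digits_ofDigits_subset {b : ℕ} (hb : 1 < b) {L : List ℕ} (hL : ∀ l ∈ L, l < b) :
    digits b (ofDigits b L) ⊆ L := by
  induction L with
  | nil => simp
  | cons a L ih =>
    rw [ofDigits_cons]
    by_cases h0 : a = 0 ∧ ofDigits b L = 0
    · simp [h0]
    · rw [digits_add b hb a _ (hL a List.mem_cons_self) (not_and_or.mp h0)]
      exact List.cons_subset_cons a (ih fun l hl ↦ hL l (List.mem_cons_of_mem a hl))

end Nat

theorem pow_sub_mul_geomSum {q B : ℕ} (κ : ℕ) (hq : 0 < q) (hBq : B ≤ q - 1) :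
    q ^ κ - B * ∑ i ∈ range κ, q ^ i = (q - B - 1) * ∑ i ∈ range κ, q ^ i + 1 := by
  have hpow : (∑ i ∈ range κ, q ^ i) * (q - 1) + 1 = q ^ κ := by
    simpa only [Nat.sub_one_add_one hq.ne'] using geom_sum_mul_add (q - 1) κ
  have hsplit : q - 1 = (q - B - 1) + B := by omega
  rw [← hpow, hsplit]
  ring_nf
  omega

theorem S_prime_is_good_general
    (q B κ : ℕ)
    (hB : 0 < B) (hqB : q ≤ 2 * B) (hBq : B ≤ q - 1) (hκ : 0 < κ) :
    0 < q ^ κ - B * ((q ^ κ - 1) / (q - 1)) ∧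
    q ^ κ - B * ((q ^ κ - 1) / (q - 1)) = (q - B - 1) * ((q ^ κ - 1) / (q - 1)) + 1 ∧
    ∀ d ∈ Nat.digits q (q ^ κ - B * ((q ^ κ - 1) / (q - 1))), d ≤ B := by
  rw [← Nat.geomSum_eq (by omega) κ, pow_sub_mul_geomSum κ (by omega) hBq]
  refine ⟨Nat.succ_pos _, rfl, ?_⟩
  obtain ⟨k, rfl⟩ : ∃ k, κ = k + 1 := ⟨κ - 1, by omega⟩
  rw [← Nat.ofDigits_succ_cons_replicate]
  intro d hd
  have hdigit : ∀ l ∈ (q - B - 1 + 1) :: List.replicate k (q - B - 1), l < q ∧ l ≤ B := by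
    simp only [List.mem_cons, List.mem_replicate]
    omega
  have hmem := Nat.digits_ofDigits_subset (by omega) (fun l hl ↦ (hdigit l hl).1) hd
  exact (hdigit d hmem).2

/-- For an odd prime `q`, a positive integer `B` with `q ≤ 2B` and `B ≤ q - 1`,
and a positive integer `κ`, the number `S' = q^κ - B * (q^κ - 1)/(q - 1)` is a
positive integer, equals `((q - B - 1)/(q - 1)) * (q^κ - 1) + 1`, and is
`(q,B)`-good. -/
theorem S_prime_is_good
    (q B κ : ℕ) (hq : q.Prime) (hq2 : 2 < q)
    (hB : 0 < B) (hqB : q ≤ 2 * B) (hBq : B ≤ q - 1) (hκ : 0 < κ) :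
    0 < q ^ κ - B * ((q ^ κ - 1) / (q - 1)) ∧
    q ^ κ - B * ((q ^ κ - 1) / (q - 1)) = (q - B - 1) * ((q ^ κ - 1) / (q - 1)) + 1 ∧
    ∀ d ∈ Nat.digits q (q ^ κ - B * ((q ^ κ - 1) / (q - 1))), d ≤ B :=
  S_prime_is_good_general q B κ hB hqB hBq hκ
end
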